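/- Let a_1, ..., a_n (n > 1, with at least two of the points distinct) be points in a Hilbert space X, and let f(x) = max_i ‖x − a_i‖ with active index set I(x̄) = {i : f(x̄) = ‖x̄ − a_i‖}. Then x̄ is the minimizer of f if and only if x̄ ∈ conv{a_i : i ∈ I(x̄)}. -/

import Mathlib

open Filter Topology RealInnerProductSpace


/-- Characterization of the solution to the smallest enclosing ball problem in a
Hilbert space: `xbar` minimizes `f(x) = max_i ‖x - aᵢ‖` iff it lies in the convex
hull of the active points. -/
theorem isMinOn_iff_mem_convexHull_points
    {X : Type*} [NormedAddCommGroup X] [InnerProductSpace ℝ X]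
    (n : ℕ) (hn : 1 < n) (a : Fin n → X)
    (hne : ∃ i j, a i ≠ a j)
    (f : X → ℝ)
    (hf : f = fun x => Finset.univ.sup' (Finset.univ_nonempty_iff.2 ⟨⟨0, by omega⟩⟩)
      fun i => ‖x - a i‖)
    (xbar : X) :
    IsMinOn f Set.univ xbar ↔
      xbar ∈ convexHull ℝ (a '' {i | f xbar = ‖xbar - a i‖}) := by
  have hne' : (Finset.univ : Finset (Fin n)).Nonempty := Finset.univ_nonempty_iff.2 ⟨⟨0, by omega⟩⟩
  set r := f xbar with hr
  have hle : ∀ i, ‖xbar - a i‖ ≤ r := by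
    intro i; simp only [hr, hf]; exact Finset.le_sup' (fun j => ‖xbar - a j‖) (Finset.mem_univ i)
  obtain ⟨i0, hi0⟩ : ∃ i, r = ‖xbar - a i‖ := by
    rw [hr, hf]
    obtain ⟨i, _, hi⟩ := Finset.exists_mem_eq_sup' hne' (fun i => ‖xbar - a i‖)
    exact ⟨i, hi⟩
  have hr0 : 0 ≤ r := hi0 ▸ norm_nonneg _
  have hfle : ∀ x i, ‖x - a i‖ ≤ f x := by
    intro x i; simp only [hf]; exact Finset.le_sup' (fun j => ‖x - a j‖) (Finset.mem_univ i)
  have hf0 : ∀ x, 0 ≤ f x := fun x => le_trans (norm_nonneg _) (hfle x i0)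
  constructor
  · -- if minimizer then in convex hull
    intro hmin
    by_contra hx
    set C := convexHull ℝ (a '' {i | f xbar = ‖xbar - a i‖}) with hC
    have hCconv : Convex ℝ C := convex_convexHull _ _
    have hCcpt : IsCompact C := (Set.Finite.image a (Set.toFinite _)).isCompact_convexHull ℝ
    have hCne : C.Nonempty := ⟨a i0, subset_convexHull _ _ ⟨i0, hi0, rfl⟩⟩
    obtain ⟨p, hpC, hpmin⟩ := hCcpt.exists_isMinOn (f := fun w => ‖xbar - w‖)
      hCne (by fun_prop)
    have hinf : ‖xbar - p‖ = ⨅ w : C, ‖xbar - w‖ := by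
      haveI : Nonempty C := ⟨⟨p, hpC⟩⟩
      refine le_antisymm (le_ciInf fun w => hpmin w.2) ?_
      refine ciInf_le (⟨0, ?_⟩ : BddBelow (Set.range fun w : C => ‖xbar - (w : X)‖)) ⟨p, hpC⟩
      rintro y ⟨w, rfl⟩
      positivity
    have hvar : ∀ w ∈ C, ⟪xbar - p, w - p⟫ ≤ 0 :=
      (norm_eq_iInf_iff_real_inner_le_zero hCconv hpC).1 hinf
    set d := p - xbar with hd
    have hdne : d ≠ 0 := fun h => hx ((sub_eq_zero.mp h) ▸ hpC)
    set ε := ‖d‖ ^ 2 with hε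
    have hε0 : 0 < ε := by rw [hε]; exact pow_pos (norm_pos_iff.mpr hdne) 2
    have hkey : ∀ w ∈ C, ε ≤ ⟪d, w - xbar⟫ := by
      intro w hw
      have h1 : ⟪xbar - p, w - p⟫ ≤ 0 := hvar w hw
      have h2 : ⟪d, w - xbar⟫ = -⟪xbar - p, w - p⟫ + ‖d‖ ^ 2 := by
        rw [hd, ← real_inner_self_eq_norm_sq]
        rw [show w - xbar = (w - p) + (p - xbar) from by abel]
        rw [inner_add_right]
        rw [show xbar - p = -(p - xbar) from by abel, inner_neg_left]
        ring
      rw [h2, hε]; linarith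
    -- eventually each coordinate drops below r
    have hev : ∀ i : Fin n, ∀ᶠ t in 𝓝[>] (0:ℝ), ‖xbar + t • d - a i‖ < r := by
      intro i
      by_cases hi : f xbar = ‖xbar - a i‖
      · -- active index
        have hai : a i ∈ C := subset_convexHull _ _ ⟨i, hi, rfl⟩
        have hik : ε ≤ ⟪d, a i - xbar⟫ := hkey _ hai
        filter_upwards [Ioo_mem_nhdsGT_of_mem (Set.left_mem_Ico.2 one_pos)] with t ht
        obtain ⟨ht0, ht1⟩ := ht
        have hexp : ‖xbar + t • d - a i‖ ^ 2
            = r ^ 2 + 2 * (t * ⟪xbar - a i, d⟫) + t ^ 2 * ε := by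
          rw [show xbar + t • d - a i = (xbar - a i) + t • d from by abel,
            @norm_add_sq_real, real_inner_smul_right, norm_smul, ← hi, ← hr,
            Real.norm_eq_abs, abs_of_pos ht0, hε]
          ring
        have hne2 : ⟪xbar - a i, d⟫ ≤ -ε := by
          have h5 : ⟪xbar - a i, d⟫ = -⟪d, a i - xbar⟫ := by
            rw [show xbar - a i = -(a i - xbar) from by abel, inner_neg_left, real_inner_comm]
          linarith [h5, hik]
        have hsq : ‖xbar + t • d - a i‖ ^ 2 < r ^ 2 := by
          rw [hexp]
          have h6 : t * ⟪xbar - a i, d⟫ ≤ t * (-ε) := mul_le_mul_of_nonneg_left hne2 ht0.le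
          have h7 : 0 < t * ε * (2 - t) := by
            have h8 : (0:ℝ) < 2 - t := by linarith
            positivity
          nlinarith [h6, h7]
        exact lt_of_pow_lt_pow_left₀ 2 hr0 hsq
      · -- inactive index
        have hlt : ‖xbar - a i‖ < r := lt_of_le_of_ne (hle i) (fun h => hi (hr.trans h.symm))
        have hcont : ContinuousAt (fun t : ℝ => ‖xbar + t • d - a i‖) 0 := by fun_prop
        have : ∀ᶠ t in 𝓝 (0:ℝ), ‖xbar + t • d - a i‖ < r := by
          have h0 : ‖xbar + (0:ℝ) • d - a i‖ < r := by simpa using hlt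
          exact hcont.eventually_lt continuousAt_const (by simpa using h0)
        exact this.filter_mono nhdsWithin_le_nhds
    have hall : ∀ᶠ t in 𝓝[>] (0:ℝ), ∀ i, ‖xbar + t • d - a i‖ < r := eventually_all.2 hev
    obtain ⟨t, ht⟩ := hall.exists
    have hflt : f (xbar + t • d) < r := by
      rw [hf]
      exact Finset.sup'_lt_iff hne' |>.2 fun i _ => ht i
    exact absurd (hmin (Set.mem_univ (xbar + t • d))) (by simpa using not_le.2 hflt)
  · -- if in convex hull then minimizer
    intro hx
    intro x _
    set v := x - xbar with hv
    have hlin : IsLinearMap ℝ (fun y : X => ⟪v, y⟫) :=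
      ⟨fun y z => inner_add_right _ _ _, fun c y => real_inner_smul_right _ _ _⟩
    set c : ℝ := (‖v‖ ^ 2 + 2 * ⟪v, xbar⟫ + r ^ 2 - f x ^ 2) / 2 with hc
    have hS : Convex ℝ {y : X | c ≤ ⟪v, y⟫} := convex_halfSpace_ge hlin c
    have hsub : a '' {i | f xbar = ‖xbar - a i‖} ⊆ {y : X | c ≤ ⟪v, y⟫} := by
      rintro _ ⟨i, hi, rfl⟩
      have h1 : ‖x - a i‖ ^ 2 ≤ f x ^ 2 :=
        pow_le_pow_left₀ (norm_nonneg _) (hfle x i) 2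
      have h2 : ‖x - a i‖ ^ 2 = ‖v‖ ^ 2 + 2 * ⟪v, xbar - a i⟫ + r ^ 2 := by
        rw [show x - a i = v + (xbar - a i) from by rw [hv]; abel, @norm_add_sq_real,
          ← hi, ← hr]
      have h3 : ⟪v, xbar - a i⟫ = ⟪v, xbar⟫ - ⟪v, a i⟫ := inner_sub_right _ _ _
      simp only [Set.mem_setOf_eq, hc]
      linarith
    have hxin : c ≤ ⟪v, xbar⟫ := convexHull_min hsub hS hx
    have hfin : r ^ 2 + ‖v‖ ^ 2 ≤ f x ^ 2 := by
      rw [hc] at hxin; linarith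
    have : r ^ 2 ≤ f x ^ 2 := by nlinarith [sq_nonneg ‖v‖]
    exact le_of_pow_le_pow_left₀ two_ne_zero (hf0 x) this
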